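/- arXiv:1906.04658 — 2 statements merged into one kernel-verified Lean document; each statement's English description precedes it below -/
import Mathlib

section
/- Dual error representation (Theorem 3.6, abstract form): assume (i) F(v) = b(u, v) for all v ∈ V₀ (primal consistency of the weak solution u ∈ V₀); (ii) z ∈ V₀ satisfies b(v, z) = J(v) for all v ∈ V₀ (dual solution); (iii) u** ∈ W satisfies the Galerkin orthogonality b(u − u**, s) = 0 for all s ∈ S₀; and (iv) u** = u**_C + u**_⊥ with u**_C ∈ V₀. Then for every z_h ∈ S₀ one has the error representation J(u − u**) = F(z − z_h) − b(u**, z − z_h) + b(u**_⊥, z) − J(u**_⊥). -/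
/-- Dual error representation (Theorem 3.6, abstract form): assume
(i) `F v = b u v` for all `v ∈ V₀` (primal consistency), (ii) `z ∈ V₀` satisfies
`b v z = J v` for all `v ∈ V₀` (dual solution), (iii) `u**` satisfies Galerkin
orthogonality `b (u − u**) s = 0` for all `s ∈ S₀`, and (iv) `u** = u**_C + u**_⊥`
with `u**_C ∈ V₀`. Then for every `z_h ∈ S₀`:
`J (u − u**) = F (z − z_h) − b u** (z − z_h) + b u**_⊥ z − J u**_⊥`. -/
theorem dual_error_representation
    {W : Type*} [AddCommGroup W] [Module ℝ W]
    (b : LinearMap.BilinForm ℝ W) (hsymm : ∀ v w : W, b v w = b w v)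
    (V₀ S₀ : Submodule ℝ W) (hS₀ : S₀ ≤ V₀)
    (F J : W →ₗ[ℝ] ℝ)
    (u z ustarstar uC uperp : W)
    (hu : u ∈ V₀)
    (hconsistency : ∀ v ∈ V₀, F v = b u v)
    (hz : z ∈ V₀)
    (hdual : ∀ v ∈ V₀, b v z = J v)
    (hgo : ∀ s ∈ S₀, b (u - ustarstar) s = 0)
    (hsplit : ustarstar = uC + uperp) (huC : uC ∈ V₀) :
    ∀ zh ∈ S₀,
      J (u - ustarstar)
        = F (z - zh) - b ustarstar (z - zh) + b uperp z - J uperp := by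
  intro zh hzh
  have h1 : F (z - zh) = b u (z - zh) := hconsistency _ (V₀.sub_mem hz (hS₀ hzh))
  have h2 : b (u - ustarstar) zh = 0 := hgo _ hzh
  have h3 : b (u - uC) z = J (u - uC) := hdual _ (V₀.sub_mem hu huC)
  subst hsplit
  simp only [map_sub, map_add, LinearMap.sub_apply, LinearMap.add_apply] at *
  linarith
end

section
/- Superconvergence inheritance in the weaker norm (combination of Lemmas 3.2, 3.3 and 3.4, abstract form): let u, u* ∈ V and set u** := u* − R u* + R u, e := u − u**. Suppose z ∈ V solves the dual problem ⟪v, z⟫_V = ⟪ι v, ι e⟫_H for all v ∈ V, and suppose there exist constants C ≥ 0, h ≥ 0 and some z_h ∈ S with ‖z − z_h‖_V ≤ C·h·‖ι e‖_H. Then ‖ι(u − u**)‖_H ≤ C·h·‖u − u*‖_V; in particular, any superconvergence of u* in the energy norm is inherited by u** with an additional order in the weaker norm. -/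
open RealInnerProductSpace

/-- Superconvergence inheritance in the weaker norm (combination of Lemmas 3.2, 3.3
and 3.4, abstract form): with `u** := u* − R u* + R u` and `e := u − u**`, if `z`
solves the dual problem `⟪v, z⟫_V = ⟪ι v, ι e⟫_H` for all `v ∈ V` and there exist
`C, h ≥ 0` and `z_h ∈ S` with `‖z − z_h‖_V ≤ C·h·‖ι e‖_H`, then
`‖ι (u − u**)‖_H ≤ C·h·‖u − u*‖_V`. -/
theorem superconvergence_inheritance
    {V H : Type*} [NormedAddCommGroup V] [InnerProductSpace ℝ V]
    [NormedAddCommGroup H] [InnerProductSpace ℝ H]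
    (ι : V →ₗ[ℝ] H) (S : Submodule ℝ V)
    (R : V →ₗ[ℝ] V)
    (hRS : ∀ v : V, R v ∈ S)
    (hRitz : ∀ v : V, ∀ s ∈ S, ⟪R v, s⟫ = ⟪v, s⟫)
    (u ustar : V) (z : V)
    (hdual : ∀ v : V, ⟪v, z⟫ = ⟪ι v, ι (u - (ustar - R ustar + R u))⟫)
    (C h : ℝ) (hC : 0 ≤ C) (hh : 0 ≤ h)
    (zh : V) (hzh : zh ∈ S)
    (happrox : ‖z - zh‖ ≤ C * h * ‖ι (u - (ustar - R ustar + R u))‖) :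
    ‖ι (u - (ustar - R ustar + R u))‖ ≤ C * h * ‖u - ustar‖ := by
  set w : V := u - ustar with hw
  set e : V := u - (ustar - R ustar + R u) with he
  have hew : e = w - R w := by
    simp only [he, hw, map_sub]; abel
  -- orthogonality of e to S
  have horth : ∀ s ∈ S, ⟪e, s⟫ = 0 := by
    intro s hs
    rw [hew, inner_sub_left, hRitz w s hs, sub_self]
  -- ‖e‖ ≤ ‖w‖
  have hew : ‖e‖ ≤ ‖w‖ := by
    have h1 : ⟪e, e⟫ = ⟪e, w⟫ := by
      nth_rewrite 2 [hew]
      rw [inner_sub_right, horth (R w) (hRS w), sub_zero]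
    have h2 : ‖e‖ ^ 2 ≤ ‖e‖ * ‖w‖ := by
      calc ‖e‖ ^ 2 = ⟪e, e⟫ := by rw [real_inner_self_eq_norm_sq]
        _ = ⟪e, w⟫ := h1
        _ ≤ ‖e‖ * ‖w‖ := real_inner_le_norm e w
    rcases eq_or_lt_of_le (norm_nonneg e) with h0 | h0
    · rw [← h0]; exact norm_nonneg w
    · nlinarith
  -- main estimate
  have hkey : ‖ι e‖ ^ 2 ≤ ‖e‖ * ‖z - zh‖ := by
    have h1 : ⟪ι e, ι e⟫ = ⟪e, z - zh⟫ := by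
      rw [inner_sub_right, horth zh hzh, sub_zero, hdual e]
    calc ‖ι e‖ ^ 2 = ⟪ι e, ι e⟫ := by rw [real_inner_self_eq_norm_sq]
      _ = ⟪e, z - zh⟫ := h1
      _ ≤ ‖e‖ * ‖z - zh‖ := real_inner_le_norm _ _
  rcases eq_or_lt_of_le (norm_nonneg (ι e)) with h0 | h0
  · rw [← h0]
    positivity
  · have h2 : ‖ι e‖ ^ 2 ≤ ‖w‖ * (C * h * ‖ι e‖) := by
      calc ‖ι e‖ ^ 2 ≤ ‖e‖ * ‖z - zh‖ := hkey
        _ ≤ ‖w‖ * (C * h * ‖ι e‖) := by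
            apply mul_le_mul hew happrox (norm_nonneg _) (norm_nonneg _)
    nlinarith
end
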